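/- arXiv:1609.00782 — 2 statements merged into one kernel-verified Lean document; each statement's English description precedes it below -/
import Mathlib

section
/- For K ≤ 0, N > 1, θ ∈ [0,D] and λ ∈ (0,1), the distortion coefficient τ_{K,N}^{(1-λ)}(θ) := (1-λ)^{1/N} · (σ_{K,N-1}^{(1-λ)}(θ))^{(N-1)/N} satisfies τ_{K,N}^{(1-λ)}(θ) ≥ (1-λ) · exp(-θλ√((N-1)K⁻)/N), where K⁻ = max{-K, 0}. -/
/-! The bound `σ_{K,N}^{(t)}(θ) ≥ t e^{-(1-t)θ√(-K/N)}` comes from convexity of `exp`: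
`-ta` is the `(1-t, t)`-combination of `ta` and `(t-2)a`, and
`sinh (t a) - t e^{-(1-t)a} sinh a` is half the resulting convexity gap. Raising it to the
power `(N-1)/N` and multiplying by `t^{1/N}` gives the bound on `τ_{K,N}^{(t)}(θ)`. -/

/-- The distortion coefficient `σ_{K,N}^{(t)}(θ)` for nonpositive `K`
(interpreted as `t` when `K = 0` or `θ = 0`). -/
noncomputable def sigmaC (K N t θ : ℝ) : ℝ :=
  if K = 0 ∨ θ = 0 then t
  else if K < 0 then
    Real.sinh (t * θ * Real.sqrt (-K / N)) / Real.sinh (θ * Real.sqrt (-K / N))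
  else Real.sin (t * θ * Real.sqrt (K / N)) / Real.sin (θ * Real.sqrt (K / N))

open Real

lemma mul_exp_neg_mul_sinh_le_sinh_mul {t : ℝ} (ht₀ : 0 ≤ t) (ht₁ : t ≤ 1) (a : ℝ) :
    t * exp (-((1 - t) * a)) * sinh a ≤ sinh (t * a) := by
  have hconvex : exp (-(t * a)) ≤ (1 - t) * exp (t * a) + t * exp ((t - 2) * a) := by
    have := convexOn_exp.2 (Set.mem_univ (t * a)) (Set.mem_univ ((t - 2) * a))
      (sub_nonneg.2 ht₁) ht₀ (by ring)
    rwa [smul_eq_mul, smul_eq_mul, smul_eq_mul, smul_eq_mul,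
      show (1 - t) * (t * a) + t * ((t - 2) * a) = -(t * a) by ring] at this
  have hsinh : t * exp (-((1 - t) * a)) * sinh a = t * (exp (t * a) - exp ((t - 2) * a)) / 2 := by
    rw [show t * a = -((1 - t) * a) + a by ring, show (t - 2) * a = -((1 - t) * a) + -a by ring,
      exp_add, exp_add, sinh_eq]
    ring
  rw [hsinh, sinh_eq]
  linarith

lemma mul_exp_neg_le_sigmaC {K N t θ : ℝ} (hK : K ≤ 0) (hN : 0 < N) (ht₀ : 0 ≤ t)
    (ht₁ : t ≤ 1) (hθ : 0 ≤ θ) : t * exp (-((1 - t) * θ * √(-K / N))) ≤ sigmaC K N t θ := by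
  by_cases hdeg : K = 0 ∨ θ = 0
  · rw [sigmaC, if_pos hdeg]
    rcases hdeg with h | h <;> simp [h]
  · obtain ⟨hK₀, hθ₀⟩ := not_or.1 hdeg
    rw [sigmaC, if_neg hdeg, if_pos (hK.lt_of_ne hK₀)]
    have ha : 0 < θ * √(-K / N) :=
      mul_pos (hθ.lt_of_ne (Ne.symm hθ₀))
        (sqrt_pos.2 (div_pos (by linarith [hK.lt_of_ne hK₀]) hN))
    rw [le_div_iff₀ (sinh_pos_iff.2 ha), mul_assoc t θ, mul_assoc (1 - t)]
    exact mul_exp_neg_mul_sinh_le_sinh_mul ht₀ ht₁ _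

lemma sqrt_div_mul_self {x n : ℝ} (hn : 0 ≤ n) : √(x / n) * n = √(n * x) := by
  rw [← sqrt_sq hn, ← sqrt_mul', sqrt_sq hn]
  · congr 1
    rcases hn.eq_or_lt with rfl | hn
    · simp
    · field_simp
  · positivity

/-- For `K ≤ 0`, `N > 1`, `θ ∈ [0,D]`, `λ ∈ (0,1)`:
`τ_{K,N}^{(1-λ)}(θ) = (1-λ)^{1/N} σ_{K,N-1}^{(1-λ)}(θ)^{(N-1)/N}
  ≥ (1-λ) exp(-θλ√((N-1)K⁻)/N)`. -/
theorem stmt2 (K N θ D lam : ℝ) (hK : K ≤ 0) (hN : 1 < N) (hθ : θ ∈ Set.Icc 0 D)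
    (hl : lam ∈ Set.Ioo (0:ℝ) 1) :
    (1 - lam) ^ ((1:ℝ)/N) * sigmaC K (N-1) (1-lam) θ ^ ((N-1)/N)
      ≥ (1 - lam) * Real.exp (-(θ * lam * Real.sqrt ((N-1) * max (-K) 0)) / N) := by
  have ht : 0 ≤ 1 - lam := by linarith [hl.2]
  have hN₁ : 0 < N - 1 := by linarith
  have hσ := mul_exp_neg_le_sigmaC hK hN₁ ht (by linarith [hl.1]) hθ.1
  have hexp : -(θ * lam * √((N - 1) * max (-K) 0)) / N
      = -((1 - (1 - lam)) * θ * √(-K / (N - 1))) * ((N - 1) / N) := by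
    rw [max_eq_left (neg_nonneg.2 hK), ← sqrt_div_mul_self hN₁.le]
    ring
  have hsum : 1 / N + (N - 1) / N = 1 := by
    rw [← add_div, add_sub_cancel, div_self (by positivity)]
  calc (1 - lam) * exp (-(θ * lam * √((N - 1) * max (-K) 0)) / N)
      = (1 - lam) ^ ((1:ℝ) / N)
          * ((1 - lam) * exp (-((1 - (1 - lam)) * θ * √(-K / (N - 1))))) ^ ((N - 1) / N) := by
        rw [mul_rpow ht (exp_pos _).le, ← exp_mul, ← hexp, ← mul_assoc,
          ← rpow_add' ht (by rw [hsum]; exact one_ne_zero), hsum, rpow_one]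
    _ ≤ (1 - lam) ^ ((1:ℝ) / N) * sigmaC K (N - 1) (1 - lam) θ ^ ((N - 1) / N) := by
        gcongr
end

section
/- Let Γ ⊂ X × X be a d²-cyclically monotone set in a geodesic metric space (X,d), and let γ¹, γ² be constant-speed geodesics with (γ¹₀, γ¹₁), (γ²₀, γ²₁) ∈ Γ and γ¹_τ = γ²_τ for some τ ∈ (0,1). Then the lengths of γ¹ and γ² are equal: d(γ¹₀, γ¹₁) = d(γ²₀, γ²₁). -/
open scoped BigOperators

/-- A constant-speed geodesic parametrized on `[0,1]`. -/
def IsGeo {X : Type*} [MetricSpace X] (γ : ℝ → X) : Prop :=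
  ∀ s ∈ Set.Icc (0:ℝ) 1, ∀ t ∈ Set.Icc (0:ℝ) 1,
    dist (γ s) (γ t) = |s - t| * dist (γ 0) (γ 1)

/-- `d²`-cyclical monotonicity of a set `Γ ⊆ X × X`. -/
def CyclMono {X : Type*} [MetricSpace X] (Γ : Set (X × X)) : Prop :=
  ∀ (n : ℕ) (p : Fin n → X × X), (∀ i, p i ∈ Γ) → ∀ σ : Equiv.Perm (Fin n),
    ∑ i, dist (p i).1 (p i).2 ^ 2 ≤ ∑ i, dist (p i).1 (p (σ i)).2 ^ 2

/-!
If two geodesics of lengths `ℓ₁, ℓ₂` meet at time `τ`, going along one up to the meeting point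
and then along the other bounds the crossed distances by `τ ℓ₁ + (1-τ) ℓ₂` and
`τ ℓ₂ + (1-τ) ℓ₁`, whose squares sum to `ℓ₁² + ℓ₂² - 2τ(1-τ)(ℓ₁-ℓ₂)²`. Cyclical monotonicity
applied to the swap of the two endpoint pairs bounds the same sum from below by `ℓ₁² + ℓ₂²`,
so `ℓ₁ = ℓ₂`.
-/

section Geodesic

variable {X : Type*} [MetricSpace X] {γ : ℝ → X} {t : ℝ}

theorem IsGeo.dist_zero_apply (hγ : IsGeo γ) (ht : t ∈ Set.Icc (0:ℝ) 1) :
    dist (γ 0) (γ t) = t * dist (γ 0) (γ 1) := by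
  rw [hγ 0 (by simp) t ht, zero_sub, abs_neg, abs_of_nonneg ht.1]

theorem IsGeo.dist_apply_one (hγ : IsGeo γ) (ht : t ∈ Set.Icc (0:ℝ) 1) :
    dist (γ t) (γ 1) = (1 - t) * dist (γ 0) (γ 1) := by
  rw [hγ t ht 1 (by simp), abs_sub_comm, abs_of_nonneg (sub_nonneg.2 ht.2)]

theorem IsGeo.dist_zero_one_le_of_apply_eq {γ' : ℝ → X} (hγ : IsGeo γ) (hγ' : IsGeo γ')
    (ht : t ∈ Set.Icc (0:ℝ) 1) (hmeet : γ t = γ' t) :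
    dist (γ 0) (γ' 1) ≤ t * dist (γ 0) (γ 1) + (1 - t) * dist (γ' 0) (γ' 1) :=
  calc dist (γ 0) (γ' 1) ≤ dist (γ 0) (γ t) + dist (γ t) (γ' 1) := dist_triangle _ _ _
    _ = t * dist (γ 0) (γ 1) + (1 - t) * dist (γ' 0) (γ' 1) := by
      rw [hγ.dist_zero_apply ht, hmeet, hγ'.dist_apply_one ht]

end Geodesic

theorem CyclMono.dist_sq_add_dist_sq_le_swap {X : Type*} [MetricSpace X] {Γ : Set (X × X)}
    (hΓ : CyclMono Γ) {x y x' y' : X} (h : (x, y) ∈ Γ) (h' : (x', y') ∈ Γ) :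
    dist x y ^ 2 + dist x' y' ^ 2 ≤ dist x y' ^ 2 + dist x' y ^ 2 := by
  have := hΓ 2 ![(x, y), (x', y')] (Fin.forall_fin_two.2 ⟨h, h'⟩) (Equiv.swap 0 1)
  simpa [Fin.sum_univ_two] using this

theorem eq_of_sq_add_sq_le_of_le_interpolation {τ ℓ₁ ℓ₂ a b : ℝ} (hτ : τ ∈ Set.Ioo (0:ℝ) 1)
    (ha : 0 ≤ a) (ha' : a ≤ τ * ℓ₁ + (1 - τ) * ℓ₂)
    (hb : 0 ≤ b) (hb' : b ≤ τ * ℓ₂ + (1 - τ) * ℓ₁)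
    (h : ℓ₁ ^ 2 + ℓ₂ ^ 2 ≤ a ^ 2 + b ^ 2) : ℓ₁ = ℓ₂ := by
  have hgap : 2 * (τ * (1 - τ)) * (ℓ₁ - ℓ₂) ^ 2 ≤ 0 := by
    have hsq_a := pow_le_pow_left₀ ha ha' 2
    have hsq_b := pow_le_pow_left₀ hb hb' 2
    nlinarith
  have hτ_pos : 0 < 2 * (τ * (1 - τ)) := by nlinarith [hτ.1, hτ.2]
  have : (ℓ₁ - ℓ₂) ^ 2 = 0 :=
    le_antisymm (nonpos_of_mul_nonpos_right hgap hτ_pos) (sq_nonneg _)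
  exact sub_eq_zero.1 (pow_eq_zero_iff two_ne_zero |>.1 this)

theorem stmt7_general {X : Type*} [MetricSpace X]
    (Γ : Set (X × X)) (hΓ : CyclMono Γ)
    (γ1 γ2 : ℝ → X) (h1 : IsGeo γ1) (h2 : IsGeo γ2)
    (hΓ1 : (γ1 0, γ1 1) ∈ Γ) (hΓ2 : (γ2 0, γ2 1) ∈ Γ)
    (τ : ℝ) (hτ : τ ∈ Set.Ioo (0:ℝ) 1) (heq : γ1 τ = γ2 τ) :
    dist (γ1 0) (γ1 1) = dist (γ2 0) (γ2 1) := by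
  have hτ' : τ ∈ Set.Icc (0:ℝ) 1 := Set.Ioo_subset_Icc_self hτ
  exact eq_of_sq_add_sq_le_of_le_interpolation hτ
    dist_nonneg (h1.dist_zero_one_le_of_apply_eq h2 hτ' heq)
    dist_nonneg (h2.dist_zero_one_le_of_apply_eq h1 hτ' heq.symm)
    (hΓ.dist_sq_add_dist_sq_le_swap hΓ1 hΓ2)

/-- Two geodesics with endpoint pairs in a `d²`-cyclically monotone set which meet at a
common intermediate time `τ ∈ (0,1)` have the same length. -/
theorem stmt7 {X : Type*} [MetricSpace X]
    (hgeo : ∀ x y : X, ∃ γ : ℝ → X, IsGeo γ ∧ γ 0 = x ∧ γ 1 = y)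
    (Γ : Set (X × X)) (hΓ : CyclMono Γ)
    (γ1 γ2 : ℝ → X) (h1 : IsGeo γ1) (h2 : IsGeo γ2)
    (hΓ1 : (γ1 0, γ1 1) ∈ Γ) (hΓ2 : (γ2 0, γ2 1) ∈ Γ)
    (τ : ℝ) (hτ : τ ∈ Set.Ioo (0:ℝ) 1) (heq : γ1 τ = γ2 τ) :
    dist (γ1 0) (γ1 1) = dist (γ2 0) (γ2 1) :=
  stmt7_general Γ hΓ γ1 γ2 h1 h2 hΓ1 hΓ2 τ hτ heq
end
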